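/- arXiv:1003.4122 — 6 statements merged into one kernel-verified Lean document; each statement's English description precedes it below -/
import Mathlib

section
/- Let P = {(0,0),(1,0),(2,0),(3,0),(0,1),(2,1),(0,2),(1,2),(0,3)} and Q = {(-1,0),(0,0),(1,0),(2,0),(0,-1),(2,-1),(0,1),(0,2),(-1,2)} in ℤ². Then P and Q are polyominoes, P and Q are homometric, and Q is neither a translate of P nor a translate of −P. -/
/-!
With `L = {(0,0), (1,0), (0,1)}` we have `P = 2L + L` and `Q = 2L - L`, and both sums are direct:
every point has a unique representation. For a direct sum `A + B` the ordered pairs of points with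
difference `x` correspond to quadruples `(a, b, a', b')` with `(a - a') + (b - b') = x`, for `A - B`
to those with `(a - a') - (b - b') = x`, and exchanging `b` with `b'` matches the two.

A translation or point reflection carrying `P` onto `Q` moves the origin, a point of `P`, into `Q`,
so non-congruence is a check of nine candidates.
-/

/-- Two points of `ℤ²` are adjacent if they differ by a unit vector. -/
def LatticeAdjacent (p q : ℤ × ℤ) : Prop :=
  (p.1 - q.1).natAbs + (p.2 - q.2).natAbs = 1

/-- A polyomino is a finite nonempty subset of `ℤ²` that is connected with respect
to lattice adjacency. -/
def IsPolyomino (A : Finset (ℤ × ℤ)) : Prop :=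
  A.Nonempty ∧ ∀ p ∈ A, ∀ q ∈ A,
    Relation.ReflTransGen (fun x y => x ∈ A ∧ y ∈ A ∧ LatticeAdjacent x y) p q

/-- Two finite subsets of `ℤ²` are homometric if `|A ∩ (A + x)| = |B ∩ (B + x)|`
for every `x ∈ ℤ²`. -/
def Homometric (A B : Finset (ℤ × ℤ)) : Prop :=
  ∀ x : ℤ × ℤ, (A ∩ A.image (· + x)).card = (B ∩ B.image (· + x)).card

/-- The polyomino `2L + L`, where `L = {(0,0),(1,0),(0,1)}`. -/
def polyP : Finset (ℤ × ℤ) :=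
  {(0,0), (1,0), (2,0), (3,0), (0,1), (2,1), (0,2), (1,2), (0,3)}

/-- The polyomino `2L - L`, where `L = {(0,0),(1,0),(0,1)}`. -/
def polyQ : Finset (ℤ × ℤ) :=
  {(-1,0), (0,0), (1,0), (2,0), (0,-1), (2,-1), (0,1), (0,2), (-1,2)}

open Finset Pointwise

instance : DecidableRel LatticeAdjacent := fun _ _ => inferInstanceAs (Decidable (_ = _))

theorem LatticeAdjacent.symm {p q : ℤ × ℤ} (h : LatticeAdjacent p q) : LatticeAdjacent q p := by
  unfold LatticeAdjacent at *
  omega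

theorem isPolyomino_of_descent (A : Finset (ℤ × ℤ)) (r : ℤ × ℤ) (hr : r ∈ A) (d : ℤ × ℤ → ℕ)
    (hd : ∀ p ∈ A, p ≠ r → ∃ q ∈ A, LatticeAdjacent p q ∧ d q < d p) : IsPolyomino A := by
  set R := fun x y => x ∈ A ∧ y ∈ A ∧ LatticeAdjacent x y
  have : Std.Symm R := ⟨fun _ _ ⟨hx, hy, h⟩ => ⟨hy, hx, h.symm⟩⟩
  have reach (n : ℕ) : ∀ p ∈ A, d p = n → Relation.ReflTransGen R r p := by
    induction n using Nat.strong_induction_on with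
    | _ n ih =>
      intro p hp hpn
      by_cases hpr : p = r
      · exact hpr ▸ .refl
      obtain ⟨q, hq, hpq, hdq⟩ := hd p hp hpr
      exact (ih _ (hpn ▸ hdq) q hq rfl).tail ⟨hq, hp, hpq.symm⟩
  refine ⟨⟨r, hr⟩, fun p hp q hq => ?_⟩
  exact (symm (reach _ p hp rfl)).trans (reach _ q hq rfl)

section Homometric

variable {α G : Type*} [AddCommGroup G] [DecidableEq G]

theorem card_inter_image_add_eq_card_filter {f : α → G} {s : Finset α} (hf : Set.InjOn f s)
    (x : G) :
    #(s.image f ∩ (s.image f).image (· + x)) = #((s ×ˢ s).filter fun p => f p.1 = f p.2 + x) := by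
  symm
  refine card_bij (fun p _ => f p.1) ?_ ?_ ?_
  · simp only [mem_filter, mem_product, mem_inter, mem_image]
    rintro ⟨a, b⟩ ⟨⟨ha, hb⟩, hab⟩
    exact ⟨⟨a, ha, rfl⟩, f b, ⟨b, hb, rfl⟩, hab.symm⟩
  · simp only [mem_filter, mem_product]
    rintro ⟨a, b⟩ ⟨⟨ha, hb⟩, hab⟩ ⟨a', b'⟩ ⟨⟨ha', hb'⟩, hab'⟩ (h : f a = f a')
    dsimp only at *
    rw [hab, hab', add_left_inj] at h
    rw [hf ha ha' (by rw [hab, hab', h]), hf hb hb' h]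
  · simp only [mem_filter, mem_product, mem_inter, mem_image]
    rintro _ ⟨⟨a, ha, rfl⟩, _, ⟨b, hb, rfl⟩, hab⟩
    exact ⟨(a, b), ⟨⟨ha, hb⟩, hab.symm⟩, rfl⟩

theorem card_add_inter_eq_card_sub_inter {A B : Finset G} (hadd : #(A + B) = #A * #B)
    (hsub : #(A - B) = #A * #B) (x : G) :
    #((A + B) ∩ (A + B).image (· + x)) = #((A - B) ∩ (A - B).image (· + x)) := by
  rw [← image_add_product, ← image_sub_product,
    card_inter_image_add_eq_card_filter (coe_product A B ▸ card_add_iff.mp hadd),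
    card_inter_image_add_eq_card_filter (coe_product A B ▸ card_image₂_iff.mp hsub)]
  let swap : (G × G) × G × G → (G × G) × G × G := fun ⟨⟨a, b⟩, a', b'⟩ => ⟨⟨a, b'⟩, a', b⟩
  have sum_eq_iff_diff_eq (a b a' b' : G) : a + b = a' + b' + x ↔ a - b' = a' - b + x := by
    rw [← sub_eq_iff_eq_add', ← sub_eq_iff_eq_add',
      show a + b - (a' + b') = a - b' - (a' - b) by abel]
  refine card_nbij' swap swap ?_ ?_ (fun _ _ => rfl) (fun _ _ => rfl)
  · simp only [coe_filter, mem_product]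
    rintro ⟨⟨a, b⟩, a', b'⟩ ⟨⟨⟨ha, hb⟩, ha', hb'⟩, h⟩
    exact ⟨⟨⟨ha, hb'⟩, ha', hb⟩, (sum_eq_iff_diff_eq a b a' b').mp h⟩
  · simp only [coe_filter, mem_product]
    rintro ⟨⟨a, b⟩, a', b'⟩ ⟨⟨⟨ha, hb⟩, ha', hb'⟩, h⟩
    exact ⟨⟨⟨ha, hb'⟩, ha', hb⟩, (sum_eq_iff_diff_eq a b' a' b).mpr h⟩

end Homometric

def tromino : Finset (ℤ × ℤ) := {(0,0), (1,0), (0,1)}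

theorem polyP_eq_add : polyP = tromino.image (2 • ·) + tromino := by decide

theorem polyQ_eq_sub : polyQ = tromino.image (2 • ·) - tromino := by decide

theorem homometric_polyP_polyQ : Homometric polyP polyQ := by
  rw [polyP_eq_add, polyQ_eq_sub]
  exact card_add_inter_eq_card_sub_inter (by decide) (by decide)

/-- `polyP` and `polyQ` are homometric polyominoes, and `polyQ` is neither a translate
of `polyP` nor a translate of `-polyP`. -/
theorem polyP_polyQ_homometric_noncongruent :
    IsPolyomino polyP ∧ IsPolyomino polyQ ∧ Homometric polyP polyQ ∧
    ¬ (∃ t : ℤ × ℤ, polyQ = polyP.image (· + t) ∨ polyQ = polyP.image (fun p => t - p)) := by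
  have l1_descent := isPolyomino_of_descent (r := 0) (d := fun p => p.1.natAbs + p.2.natAbs)
  refine ⟨l1_descent polyP (by decide) (by decide), l1_descent polyQ (by decide) (by decide),
    homometric_polyP_polyQ, ?_⟩
  rintro ⟨t, h | h⟩
  · have ht : t ∈ polyQ := h ▸ mem_image.mpr ⟨0, by decide, zero_add t⟩
    exact (by decide : ∀ t ∈ polyQ, polyQ ≠ polyP.image (· + t)) t ht h
  · have ht : t ∈ polyQ := h ▸ mem_image.mpr ⟨0, by decide, sub_zero t⟩
    exact (by decide : ∀ t ∈ polyQ, polyQ ≠ polyP.image (t - ·)) t ht h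
end

section
/- Let A ⊆ ℝⁿ be a regular compact set. If the support of g_A is not convex, or if the difference set DA is different from D(conv A), then g_A ≠ g_K for every convex body K ⊆ ℝⁿ. -/
open MeasureTheory Topology Filter Set Pointwise

/-- The covariogram of a set `A ⊆ ℝⁿ`: `g_A(x) = λₙ(A ∩ (A + x))`. -/
noncomputable def covariogram {n : ℕ} (A : Set (EuclideanSpace ℝ (Fin n)))
    (x : EuclideanSpace ℝ (Fin n)) : ℝ :=
  (volume (A ∩ ((· + x) '' A))).toReal

/-- For interior points `a, b` of `A`, the covariogram is nonzero at `a - b`. -/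
lemma covariogram_ne_zero_of_mem_interior {n : ℕ} {A : Set (EuclideanSpace ℝ (Fin n))}
    (hA : IsCompact A) {a b : EuclideanSpace ℝ (Fin n)}
    (ha : a ∈ interior A) (hb : b ∈ interior A) :
    covariogram A (a - b) ≠ 0 := by
  obtain ⟨δ, hδpos, hδ⟩ := Metric.isOpen_iff.mp isOpen_interior a ha
  obtain ⟨ε, hεpos, hε⟩ := Metric.isOpen_iff.mp isOpen_interior b hb
  set r := min δ ε with hr
  have hrpos : 0 < r := lt_min hδpos hεpos
  have hball : Metric.ball a r ⊆ A ∩ ((· + (a - b)) '' A) := by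
    intro y hy
    have hyA : y ∈ A := interior_subset (hδ (Metric.ball_subset_ball (min_le_left δ ε) hy))
    refine ⟨hyA, y - (a - b), ?_, by show y - (a - b) + (a - b) = y; module⟩
    have : dist (y - (a - b)) b = dist y a := by
      rw [dist_eq_norm, dist_eq_norm]
      congr 1
      module
    refine interior_subset (hε ?_)
    rw [Metric.mem_ball, this]
    exact lt_of_lt_of_le (Metric.mem_ball.mp hy) (min_le_right δ ε)
  have hpos : 0 < volume (A ∩ ((· + (a - b)) '' A)) :=
    lt_of_lt_of_le (Metric.measure_ball_pos volume a hrpos) (measure_mono hball)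
  have hfin : volume (A ∩ ((· + (a - b)) '' A)) < ⊤ :=
    lt_of_le_of_lt (measure_mono inter_subset_left) hA.measure_lt_top
  simp only [covariogram]
  exact ENNReal.toReal_ne_zero.mpr ⟨hpos.ne', hfin.ne⟩

/-- For a regular compact set, the support of the covariogram is the difference set. -/
lemma tsupport_covariogram {n : ℕ} (A : Set (EuclideanSpace ℝ (Fin n)))
    (hA : IsCompact A) (hreg : A = closure (interior A)) :
    tsupport (covariogram A) = A + (-A) := by
  apply Subset.antisymm
  · refine closure_minimal ?_ (hA.add hA.neg).isClosed
    intro x hx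
    have hvol : volume (A ∩ ((· + x) '' A)) ≠ 0 := by
      intro h0
      exact hx (by simp only [covariogram, h0, ENNReal.toReal_zero])
    obtain ⟨a, haA, a', ha', heq⟩ := nonempty_of_measure_ne_zero hvol
    exact ⟨a, haA, -a', neg_mem_neg.mpr ha', by rw [← heq]; module⟩
  · rintro x ⟨a, haA, b', hb', rfl⟩
    rw [Set.mem_neg] at hb'
    set b := -b' with hbdef
    have hbA : b ∈ A := hb'
    have hprod : (a, b) ∈ closure (interior A ×ˢ interior A) := by
      rw [closure_prod_eq, ← hreg]
      exact ⟨haA, hbA⟩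
    have himg : (fun p : EuclideanSpace ℝ (Fin n) × EuclideanSpace ℝ (Fin n) => p.1 - p.2) ''
        closure (interior A ×ˢ interior A) ⊆
        closure ((fun p : EuclideanSpace ℝ (Fin n) × EuclideanSpace ℝ (Fin n) => p.1 - p.2) ''
          (interior A ×ˢ interior A)) :=
      image_closure_subset_closure_image (continuous_fst.sub continuous_snd)
    have hsub : (fun p : EuclideanSpace ℝ (Fin n) × EuclideanSpace ℝ (Fin n) => p.1 - p.2) ''
        (interior A ×ˢ interior A) ⊆ Function.support (covariogram A) := by
      rintro y ⟨⟨u, v⟩, ⟨hu, hv⟩, rfl⟩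
      exact covariogram_ne_zero_of_mem_interior hA hu hv
    have : a + b' = (fun p : EuclideanSpace ℝ (Fin n) × EuclideanSpace ℝ (Fin n) => p.1 - p.2)
        (a, b) := by simp [hbdef, sub_eq_add_neg]
    show a + b' ∈ tsupport (covariogram A)
    rw [this]
    exact closure_mono hsub (himg ⟨(a, b), hprod, rfl⟩)

/-- If `A ⊆ ℝⁿ` is a regular compact set and either the support of `g_A` is not convex or
`DA ≠ D(conv A)`, then `g_A ≠ g_K` for every convex body `K`. -/
theorem covariogram_ne_of_suppNotConvex_or_diffSet_ne {n : ℕ}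
    (A : Set (EuclideanSpace ℝ (Fin n))) (hA : IsCompact A)
    (hreg : A = closure (interior A))
    (h : ¬ Convex ℝ (tsupport (covariogram A)) ∨
      A + (-A) ≠ convexHull ℝ A + (-(convexHull ℝ A))) :
    ∀ K : Set (EuclideanSpace ℝ (Fin n)), IsCompact K → Convex ℝ K →
      (interior K).Nonempty → covariogram A ≠ covariogram K := by
  intro K hK hKc hKint heq
  have hKreg : K = closure (interior K) := by
    apply Subset.antisymm
    · obtain ⟨x, hx⟩ := hKint
      intro y hy
      have htt : Filter.Tendsto (fun t : ℝ => t • x + (1 - t) • y) (𝓝[>] (0 : ℝ)) (𝓝 y) := by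
        have hcont : Continuous (fun t : ℝ => t • x + (1 - t) • y) := (continuous_id.smul continuous_const).add ((continuous_const.sub continuous_id).smul continuous_const)
        have h2 := (hcont.tendsto 0).mono_left (nhdsWithin_le_nhds (s := Set.Ioi (0 : ℝ)))
        simpa using h2
      refine mem_closure_of_tendsto htt ?_
      filter_upwards [Ioo_mem_nhdsGT_of_mem (by norm_num : (0 : ℝ) ∈ Ico (0 : ℝ) 1)] with t ht
      exact hKc.combo_interior_self_mem_interior hx hy ht.1 (by linarith [ht.2]) (by ring)
    · exact (closure_mono interior_subset).trans hK.isClosed.closure_eq.subset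
  have hAsupp := tsupport_covariogram A hA hreg
  have hKsupp := tsupport_covariogram K hK hKreg
  have hDA : A + (-A) = K + (-K) := by
    rw [← hAsupp, ← hKsupp, heq]
  have hconv : Convex ℝ (A + (-A)) := by
    rw [hDA]
    exact hKc.add hKc.neg
  rcases h with h1 | h2
  · exact h1 (hAsupp ▸ hconv)
  · apply h2
    calc A + (-A) = convexHull ℝ (A + (-A)) := (hconv.convexHull_eq).symm
      _ = convexHull ℝ A + convexHull ℝ (-A) := convexHull_add A (-A)
      _ = convexHull ℝ A + (-(convexHull ℝ A)) := by rw [convexHull_neg]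
end

section
/- Let D be a bounded Lebesgue-measurable subset of ℝ with λ₁(D) > 0. Then liminf_{h → 0⁺} λ₁(D \ (D + h)) / h ≥ 1, where λ₁ denotes Lebesgue measure on ℝ. -/
/-!
Write `A = D \ (D + h)`. Walking down from a point of `D` in steps of `h` one leaves `D`
(it is bounded below), and the last point reached lies in `A`; measured window by window this
gives `λ₁(D ∩ [t, t + h)) ≤ λ₁(A)` for every `t`. Centring the window at a Lebesgue density
point of `D` makes the left side `h - o(h)`.
-/

open MeasureTheory Topology Filter Set
open scoped ENNReal

section TranslateDifference

variable {D : Set ℝ} {h : ℝ}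

lemma volume_inter_Ico_le_sdiff_translate_add (s : ℝ) :
    volume (D ∩ Ico s (s + h)) ≤
      volume ((D \ ((· + h) '' D)) ∩ Ico s (s + h)) + volume (D ∩ Ico (s - h) s) := by
  have hcover : D ∩ Ico s (s + h) ⊆
      ((D \ ((· + h) '' D)) ∩ Ico s (s + h)) ∪ ((· + h) '' (D ∩ Ico (s - h) s)) := by
    rintro x ⟨hxD, hxs⟩
    by_cases hx : x ∈ (· + h) '' D
    · obtain ⟨y, hyD, rfl⟩ := hx
      exact Or.inr ⟨y, ⟨hyD, by linarith [hxs.1], by linarith [hxs.2]⟩, rfl⟩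
    · exact Or.inl ⟨⟨hxD, hx⟩, hxs⟩
  calc volume (D ∩ Ico s (s + h))
      ≤ volume ((D \ ((· + h) '' D)) ∩ Ico s (s + h)) +
          volume ((· + h) '' (D ∩ Ico (s - h) s)) :=
        (measure_mono hcover).trans (measure_union_le _ _)
    _ = _ := by
        congr 1
        rw [image_add_right, measure_preimage_add_right]

lemma volume_inter_Ico_le_sdiff_translate_inter_Iio (hh : 0 ≤ h) {s : ℝ} (hs : D ⊆ Ici s)
    (n : ℕ) :
    volume (D ∩ Ico (s + n * h - h) (s + n * h)) ≤
      volume ((D \ ((· + h) '' D)) ∩ Iio (s + n * h)) := by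
  induction n with
  | zero =>
    have hempty : D ∩ Ico (s - h) s = ∅ :=
      eq_empty_of_forall_notMem fun x ⟨hxD, hx⟩ => (not_le.mpr hx.2) (hs hxD)
    simp [hempty]
  | succ n ih =>
    set A := D \ ((· + h) '' D)
    set t := s + n * h
    have ht : s + (n + 1 : ℕ) * h = t + h := by push_cast; ring
    rw [ht, add_sub_cancel_right]
    calc volume (D ∩ Ico t (t + h))
        ≤ volume (A ∩ Ico t (t + h)) + volume (D ∩ Ico (t - h) t) :=
          volume_inter_Ico_le_sdiff_translate_add t
      _ ≤ volume (A ∩ Ico t (t + h)) + volume (A ∩ Iio t) := by gcongr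
      _ = volume (A ∩ Iio (t + h)) := by
          have hbelow : A ∩ Iio (t + h) ∩ Iio t = A ∩ Iio t := by
            rw [inter_assoc, Iio_inter_Iio, min_eq_right (by linarith)]
          have habove : (A ∩ Iio (t + h)) \ Iio t = A ∩ Ico t (t + h) := by
            rw [sdiff_eq, compl_Iio, inter_assoc, inter_comm (Iio _), Ici_inter_Iio]
          rw [← measure_inter_add_sdiff (A ∩ Iio (t + h)) measurableSet_Iio, hbelow, habove,
            add_comm]

lemma volume_inter_Ico_le_volume_sdiff_translate (hD : BddBelow D) (hh : 0 < h) (t : ℝ) :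
    volume (D ∩ Ico t (t + h)) ≤ volume (D \ ((· + h) '' D)) := by
  obtain ⟨b, hb⟩ := hD
  obtain ⟨n, hn⟩ := exists_nat_ge ((t + h - b) / h)
  have hs : D ⊆ Ici (t + h - n * h) := fun x hx => by
    rw [div_le_iff₀ hh] at hn
    simp only [mem_Ici]
    linarith [hb hx]
  have key := volume_inter_Ico_le_sdiff_translate_inter_Iio hh.le hs n
  rw [sub_add_cancel, add_sub_cancel_right] at key
  exact key.trans (measure_mono inter_subset_left)

end TranslateDifference

lemma exists_tendsto_volume_inter_Ico_div {D : Set ℝ} (hD : volume D ≠ 0) :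
    ∃ x : ℝ, Tendsto (fun h => volume (D ∩ Ico (x - h / 2) (x - h / 2 + h)) / ENNReal.ofReal h)
      (𝓝[>] 0) (𝓝 1) := by
  have : (ae (volume.restrict D)).NeBot := ae_neBot.mpr (Measure.restrict_eq_zero.not.mpr hD)
  obtain ⟨x, hx⟩ := (Besicovitch.ae_tendsto_measure_inter_div volume D).exists
  have hhalf : Tendsto (fun h : ℝ => h / 2) (𝓝[>] 0) (𝓝[>] 0) :=
    tendsto_nhdsWithin_iff.mpr ⟨((continuous_id.div_const 2).tendsto' 0 0 (zero_div 2)).mono_left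
      nhdsWithin_le_nhds, eventually_mem_nhdsWithin.mono fun _ hh => mem_Ioi.mpr (half_pos hh)⟩
  refine ⟨x, (hx.comp hhalf).congr fun h => ?_⟩
  simp only [Function.comp_apply, Real.closedBall_eq_Icc, Real.volume_Icc]
  rw [measure_congr ((ae_eq_refl D).inter Ico_ae_eq_Icc)]
  ring_nf

theorem liminf_measure_sdiff_translate_ge_one_general (D : Set ℝ)
    (hbd : Bornology.IsBounded D) (hpos : 0 < volume D) :
    1 ≤ liminf (fun h : ℝ => volume (D \ ((· + h) '' D)) / ENNReal.ofReal h) (𝓝[>] 0) := by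
  obtain ⟨x, hx⟩ := exists_tendsto_volume_inter_Ico_div hpos.ne'
  refine hx.liminf_eq.symm.le.trans (liminf_le_liminf ?_)
  filter_upwards [self_mem_nhdsWithin] with h hh
  exact ENNReal.div_le_div_right
    (volume_inter_Ico_le_volume_sdiff_translate hbd.bddBelow hh _) _

/-- If `D ⊆ ℝ` is bounded, measurable and of positive measure, then
`liminf_{h → 0⁺} λ₁(D \ (D + h)) / h ≥ 1`. -/
theorem liminf_measure_sdiff_translate_ge_one (D : Set ℝ)
    (hmeas : MeasurableSet D) (hbd : Bornology.IsBounded D) (hpos : 0 < volume D) :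
    1 ≤ liminf (fun h : ℝ => volume (D \ ((· + h) '' D)) / ENNReal.ofReal h) (𝓝[>] 0) :=
  liminf_measure_sdiff_translate_ge_one_general D hbd hpos
end

section
/- Let A and B be finite subsets of ℤⁿ and let Ā = A + [0,1]ⁿ and B̄ = B + [0,1]ⁿ (Minkowski sums in ℝⁿ, identifying ℤⁿ with the integer lattice in ℝⁿ). Then g_{Ā} = g_{B̄} if and only if |A ∩ (A + z)| = |B ∩ (B + z)| for every z ∈ ℤⁿ. -/
open MeasureTheory Topology Filter Set Pointwise

/-- The embedding of the integer lattice `ℤⁿ` into `ℝⁿ`. -/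
def latticeEmbed {n : ℕ} (z : Fin n → ℤ) : EuclideanSpace ℝ (Fin n) :=
  WithLp.toLp 2 (fun i => (z i : ℝ))

/-- The unit cube `[0,1]ⁿ ⊆ ℝⁿ`. -/
def unitCube (n : ℕ) : Set (EuclideanSpace ℝ (Fin n)) :=
  {x | ∀ i, x i ∈ Set.Icc (0 : ℝ) 1}

/-!
The animal `Ā` is the union of the unit cubes `a + [0,1]ⁿ`, `a ∈ A`, and two distinct lattice
translates of the cube meet in a null set. Hence `Ā ∩ (Ā + x)` is, up to null sets, the disjoint
union of the sets `(a + C) ∩ (b + x + C)`, and translation invariance of Lebesgue measure gives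
`g_Ā(x) = ∑_{a, b ∈ A} g_C(x - (a - b))` for the unit cube `C`. So `g_Ā` depends only on the
multiset of differences `a - b`, in which `z` occurs `|A ∩ (A + z)|` times. Conversely `g_C`
vanishes at every lattice point except `0`, where it is `1`, so `g_Ā(z) = |A ∩ (A + z)|` for
`z ∈ ℤⁿ`.
-/

open scoped Finset

lemma measure_vadd_inter_vadd {G : Type*} [MeasurableSpace G] [AddGroup G]
    (μ : Measure G) [μ.IsAddLeftInvariant] (u w : G) (s t : Set G) :
    μ ((u +ᵥ s) ∩ (w +ᵥ t)) = μ (s ∩ ((-u + w) +ᵥ t)) := by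
  rw [← measure_vadd μ u (s ∩ _), Set.vadd_set_inter, vadd_vadd, add_neg_cancel_left]

section Difference

variable {G : Type*} [AddCommGroup G]

def differenceMultiset (A : Finset G) : Multiset G :=
  (A ×ˢ A).val.map fun p => p.1 - p.2

variable [DecidableEq G]

lemma card_filter_sub_eq (A : Finset G) (z : G) :
    #{p ∈ A ×ˢ A | p.1 - p.2 = z} = #(A ∩ A.image (· + z)) := by
  refine Finset.card_nbij' Prod.fst (fun a => (a, a - z)) ?_ ?_ ?_ fun _ _ => rfl
  · rintro ⟨a, b⟩ hp
    simp only [Finset.coe_filter, Finset.mem_product, Set.mem_ofPred_eq] at hp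
    obtain ⟨⟨ha, hb⟩, rfl⟩ := hp
    simpa [ha] using hb
  · intro a ha
    simpa [sub_eq_add_neg] using ha
  · rintro ⟨a, b⟩ hp
    simp only [Finset.coe_filter, Finset.mem_product, Set.mem_ofPred_eq] at hp
    obtain ⟨-, rfl⟩ := hp
    simp

lemma count_differenceMultiset (A : Finset G) (z : G) :
    (differenceMultiset A).count z = #(A ∩ A.image (· + z)) := by
  rw [differenceMultiset, Multiset.count_map, ← card_filter_sub_eq]
  simp only [eq_comm (a := z)]
  rfl

end Difference

section Animal

variable {n : ℕ}

@[simp]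
lemma latticeEmbed_apply (z : Fin n → ℤ) (i : Fin n) : latticeEmbed z i = z i := rfl

lemma latticeEmbed_sub (a b : Fin n → ℤ) :
    latticeEmbed (a - b) = latticeEmbed a - latticeEmbed b := by
  ext i
  simp

lemma covariogram_eq_toReal_volume_inter_vadd (S : Set (EuclideanSpace ℝ (Fin n)))
    (x : EuclideanSpace ℝ (Fin n)) : covariogram S x = (volume (S ∩ (x +ᵥ S))).toReal := by
  simp only [covariogram, add_comm _ x, ← vadd_eq_add, Set.image_vadd]

lemma measurableSet_unitCube : MeasurableSet (unitCube n) := by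
  unfold unitCube
  measurability

lemma unitCube_inter_vadd (x : EuclideanSpace ℝ (Fin n)) :
    unitCube n ∩ (x +ᵥ unitCube n) =
      WithLp.ofLp ⁻¹' Set.univ.pi fun i => Icc (max 0 (x i)) (min 1 (x i + 1)) := by
  ext y
  simp only [unitCube, mem_inter_iff, mem_ofPred_eq, mem_vadd_set_iff_neg_vadd_mem, mem_preimage,
    mem_univ_pi, mem_Icc, max_le_iff, le_min_iff, vadd_eq_add, PiLp.add_apply, PiLp.neg_apply,
    ← forall_and]
  refine forall_congr' fun i => ?_
  constructor <;> intro h <;> refine ⟨⟨?_, ?_⟩, ?_, ?_⟩ <;> linarith [h.1.1, h.1.2, h.2.1, h.2.2]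

lemma volume_unitCube_inter_vadd (x : EuclideanSpace ℝ (Fin n)) :
    volume (unitCube n ∩ (x +ᵥ unitCube n)) = ∏ i, ENNReal.ofReal (1 - |x i|) := by
  rw [unitCube_inter_vadd, (PiLp.volume_preserving_ofLp _).measure_preimage
    (MeasurableSet.univ_pi fun _ => measurableSet_Icc).nullMeasurableSet, volume_pi_pi]
  refine Finset.prod_congr rfl fun i _ => ?_
  rw [Real.volume_Icc]
  congr 1
  rcases le_total 0 (x i) with h | h
  · rw [abs_of_nonneg h, max_eq_right h, min_eq_left (by linarith)]
  · rw [abs_of_nonpos h, max_eq_left h, min_eq_right (by linarith)]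
    ring

lemma volume_unitCube_inter_vadd_latticeEmbed (z : Fin n → ℤ) :
    volume (unitCube n ∩ (latticeEmbed z +ᵥ unitCube n)) = if z = 0 then 1 else 0 := by
  rw [volume_unitCube_inter_vadd]
  split_ifs with hz
  · simp [hz]
  · obtain ⟨i, hi⟩ := Function.ne_iff.mp hz
    refine Finset.prod_eq_zero (Finset.mem_univ i) (ENNReal.ofReal_eq_zero.mpr ?_)
    have : (1 : ℝ) ≤ |(z i : ℝ)| := by exact_mod_cast Int.one_le_abs hi
    simpa using this

lemma covariogram_unitCube_latticeEmbed (z : Fin n → ℤ) :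
    covariogram (unitCube n) (latticeEmbed z) = if z = 0 then 1 else 0 := by
  rw [covariogram_eq_toReal_volume_inter_vadd, volume_unitCube_inter_vadd_latticeEmbed]
  split_ifs <;> rfl

lemma aedisjoint_vadd_latticeEmbed_unitCube (u : EuclideanSpace ℝ (Fin n)) {a b : Fin n → ℤ}
    (hab : a ≠ b) :
    AEDisjoint volume ((u + latticeEmbed a) +ᵥ unitCube n) ((u + latticeEmbed b) +ᵥ unitCube n) := by
  rw [AEDisjoint, measure_vadd_inter_vadd, neg_add_rev, add_assoc, neg_add_cancel_left,
    neg_add_eq_sub, ← latticeEmbed_sub, volume_unitCube_inter_vadd_latticeEmbed,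
    if_neg (sub_ne_zero.mpr hab.symm)]

lemma animal_eq_iUnion (A : Finset (Fin n → ℤ)) :
    latticeEmbed '' ↑A + unitCube n = ⋃ a ∈ A, latticeEmbed a +ᵥ unitCube n := by
  rw [← Set.iUnion_add_left_image, Set.biUnion_image]
  simp only [← vadd_eq_add, Set.image_vadd, Finset.mem_coe]

lemma animal_inter_vadd_animal (A : Finset (Fin n → ℤ)) (x : EuclideanSpace ℝ (Fin n)) :
    (latticeEmbed '' ↑A + unitCube n) ∩ (x +ᵥ (latticeEmbed '' ↑A + unitCube n)) =
      ⋃ p ∈ A ×ˢ A, (latticeEmbed p.1 +ᵥ unitCube n) ∩ ((x + latticeEmbed p.2) +ᵥ unitCube n) := by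
  rw [animal_eq_iUnion, Set.vadd_set_iUnion₂, Set.iUnion₂_inter_iUnion₂]
  simp only [vadd_vadd, ← Finset.mem_coe, Finset.coe_product, Set.biUnion_prod']

lemma volume_animal_inter_vadd (A : Finset (Fin n → ℤ)) (x : EuclideanSpace ℝ (Fin n)) :
    volume ((latticeEmbed '' ↑A + unitCube n) ∩ (x +ᵥ (latticeEmbed '' ↑A + unitCube n))) =
      ∑ p ∈ A ×ˢ A, volume (unitCube n ∩ ((x - latticeEmbed (p.1 - p.2)) +ᵥ unitCube n)) := by
  rw [animal_inter_vadd_animal, measure_biUnion_finset₀]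
  · refine Finset.sum_congr rfl fun p _ => ?_
    rw [measure_vadd_inter_vadd, latticeEmbed_sub]
    congr 3
    abel
  · intro p _ q _ hpq
    by_cases h₁ : p.1 = q.1
    · have h₂ : p.2 ≠ q.2 := fun h₂ => hpq (Prod.ext h₁ h₂)
      exact (aedisjoint_vadd_latticeEmbed_unitCube x h₂).mono inter_subset_right inter_subset_right
    · have h := aedisjoint_vadd_latticeEmbed_unitCube 0 h₁
      rw [zero_add, zero_add] at h
      exact h.mono inter_subset_left inter_subset_left
  · exact fun p _ => ((measurableSet_unitCube.const_vadd _).inter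
      (measurableSet_unitCube.const_vadd _)).nullMeasurableSet

lemma covariogram_animal_eq_sum (A : Finset (Fin n → ℤ)) (x : EuclideanSpace ℝ (Fin n)) :
    covariogram (latticeEmbed '' ↑A + unitCube n) x =
      ∑ p ∈ A ×ˢ A, covariogram (unitCube n) (x - latticeEmbed (p.1 - p.2)) := by
  simp only [covariogram_eq_toReal_volume_inter_vadd, volume_animal_inter_vadd]
  refine ENNReal.toReal_sum fun p _ => ?_
  rw [volume_unitCube_inter_vadd]
  exact ENNReal.prod_ne_top fun _ _ => ENNReal.ofReal_ne_top

lemma covariogram_animal_eq_sum_differenceMultiset (A : Finset (Fin n → ℤ))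
    (x : EuclideanSpace ℝ (Fin n)) :
    covariogram (latticeEmbed '' ↑A + unitCube n) x =
      ((differenceMultiset A).map fun z => covariogram (unitCube n) (x - latticeEmbed z)).sum := by
  rw [covariogram_animal_eq_sum, differenceMultiset, Multiset.map_map]
  rfl

lemma covariogram_animal_latticeEmbed (A : Finset (Fin n → ℤ)) (z : Fin n → ℤ) :
    covariogram (latticeEmbed '' ↑A + unitCube n) (latticeEmbed z) = #(A ∩ A.image (· + z)) := by
  simp only [covariogram_animal_eq_sum, ← latticeEmbed_sub, covariogram_unitCube_latticeEmbed,
    sub_eq_zero]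
  rw [Finset.sum_boole]
  simp only [eq_comm (a := z), card_filter_sub_eq]

end Animal

/-- The animals `Ā = A + [0,1]ⁿ` and `B̄ = B + [0,1]ⁿ` of finite sets `A, B ⊆ ℤⁿ` have equal
covariograms if and only if `A` and `B` are homometric. -/
theorem covariogram_animal_eq_iff_homometric {n : ℕ} (A B : Finset (Fin n → ℤ)) :
    covariogram (latticeEmbed '' ↑A + unitCube n) =
      covariogram (latticeEmbed '' ↑B + unitCube n) ↔
    ∀ z : Fin n → ℤ, (A ∩ A.image (· + z)).card = (B ∩ B.image (· + z)).card := by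
  constructor
  · intro h z
    have hz := congrFun h (latticeEmbed z)
    rwa [covariogram_animal_latticeEmbed, covariogram_animal_latticeEmbed, Nat.cast_inj] at hz
  · intro h
    have hdiff : differenceMultiset A = differenceMultiset B :=
      Multiset.ext.mpr fun z => by rw [count_differenceMultiset, count_differenceMultiset, h]
    funext x
    rw [covariogram_animal_eq_sum_differenceMultiset, covariogram_animal_eq_sum_differenceMultiset,
      hdiff]
end

section
/- Let A and B be finite subsets of ℤⁿ. Assume that every point of A + B can be written in a unique way as a + b with a ∈ A and b ∈ B (i.e. a + b = a' + b' with a, a' ∈ A and b, b' ∈ B implies a = a' and b = b'), and likewise every point of A − B can be written in a unique way as a − b with a ∈ A and b ∈ B. Then A + B and A − B are homometric, i.e. |(A + B) ∩ (A + B + x)| = |(A − B) ∩ (A − B + x)| for every x ∈ ℤⁿ. -/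
/-!
Writing `A + B` as the image of `A × B` under addition, unique representation says this map is
injective, so `|(A + B) ∩ (A + B + x)|` counts the quadruples `(a, b, a', b') ∈ A × B × A × B`
with `a + b = a' + b' + x`; likewise `|(A - B) ∩ (A - B + x)|` counts those with
`a - b = a' - b' + x`. Exchanging `b` and `b'` matches the two sets of quadruples, since
`a + b = a' + b' + x ↔ a - b' = a' - b + x`.
-/

open Pointwise

namespace Finset

theorem injOn_uncurry_product {α β γ : Type*} {f : α → β → γ} {s : Finset α} {t : Finset β}
    (h : ∀ a ∈ s, ∀ a' ∈ s, ∀ b ∈ t, ∀ b' ∈ t, f a b = f a' b' → a = a' ∧ b = b') :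
    Set.InjOn (fun p : α × β => f p.1 p.2) ↑(s ×ˢ t) := by
  rintro ⟨a, b⟩ hab ⟨a', b'⟩ hab' heq
  simp only [coe_product, Set.mem_prod, mem_coe] at hab hab'
  obtain ⟨rfl, rfl⟩ := h a hab.1 a' hab'.1 b hab.2 b' hab'.2 heq
  rfl

theorem card_image_inter_image_add_eq_card_filter {α G : Type*} [Add G] [IsRightCancelAdd G]
    [DecidableEq G] {s : Finset α} {f : α → G} (hf : Set.InjOn f s) (x : G) :
    (s.image f ∩ (s.image f).image (· + x)).card =
      ((s ×ˢ s).filter fun p => f p.1 = f p.2 + x).card := by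
  refine (card_bij (fun p _ => f p.1) ?_ ?_ ?_).symm
  · rintro ⟨p, q⟩ hpq
    simp only [mem_filter, mem_product] at hpq
    exact mem_inter.2 ⟨mem_image_of_mem f hpq.1.1, mem_image.2 ⟨f q, mem_image_of_mem f hpq.1.2,
      hpq.2.symm⟩⟩
  · rintro ⟨p, q⟩ hpq ⟨p', q'⟩ hpq' heq
    simp only [mem_filter, mem_product] at hpq hpq'
    have hp : p = p' := hf hpq.1.1 hpq'.1.1 heq
    have hq : q = q' := hf hpq.1.2 hpq'.1.2 <| add_right_cancel (by rw [← hpq.2, ← hpq'.2, heq])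
    rw [hp, hq]
  · intro y hy
    obtain ⟨⟨p, hp, rfl⟩, z, ⟨q, hq, rfl⟩, hqx⟩ := by simpa only [mem_inter, mem_image] using hy
    exact ⟨(p, q), mem_filter.2 ⟨mem_product.2 ⟨hp, hq⟩, hqx.symm⟩, rfl⟩

theorem card_filter_add_eq_card_filter_sub {G : Type*} [AddCommGroup G] [DecidableEq G]
    (A B : Finset G) (x : G) :
    (((A ×ˢ B) ×ˢ (A ×ˢ B)).filter fun p => p.1.1 + p.1.2 = p.2.1 + p.2.2 + x).card =
      (((A ×ˢ B) ×ˢ (A ×ˢ B)).filter fun p => p.1.1 - p.1.2 = p.2.1 - p.2.2 + x).card := by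
  let σ : (G × G) × G × G → (G × G) × G × G := fun ⟨⟨a, b⟩, a', b'⟩ => ⟨⟨a, b'⟩, a', b⟩
  refine card_nbij' σ σ ?_ ?_ (fun _ _ => rfl) (fun _ _ => rfl) <;>
  · rintro ⟨⟨a, b⟩, a', b'⟩ h
    simp only [coe_filter, mem_product, Set.mem_ofPred_eq, σ] at h ⊢
    exact ⟨⟨⟨h.1.1.1, h.1.2.2⟩, h.1.2.1, h.1.1.2⟩, by grind⟩

end Finset

/-- If every point of `A + B` has a unique representation `a + b` and every point of
`A - B` has a unique representation `a - b` (`a ∈ A`, `b ∈ B`), then `A + B` and `A - B`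
are homometric. -/
theorem homometric_add_sub {n : ℕ} (A B : Finset (Fin n → ℤ))
    (hadd : ∀ a ∈ A, ∀ a' ∈ A, ∀ b ∈ B, ∀ b' ∈ B, a + b = a' + b' → a = a' ∧ b = b')
    (hsub : ∀ a ∈ A, ∀ a' ∈ A, ∀ b ∈ B, ∀ b' ∈ B, a - b = a' - b' → a = a' ∧ b = b') :
    ∀ x : Fin n → ℤ,
      ((A + B) ∩ (A + B).image (· + x)).card =
      ((A - B) ∩ (A - B).image (· + x)).card := by
  intro x
  rw [← Finset.image_add_product (s := A) (t := B), ← Finset.image_sub_product (s := A) (t := B),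
    Finset.card_image_inter_image_add_eq_card_filter (Finset.injOn_uncurry_product hadd),
    Finset.card_image_inter_image_add_eq_card_filter (Finset.injOn_uncurry_product hsub)]
  exact Finset.card_filter_add_eq_card_filter_sub A B x
end

section
/- Let N be a positive integer and let D ⊆ ℝ be a bounded Lebesgue-measurable set that coincides, up to a set of λ₁-measure zero, with a union of N pairwise disjoint closed intervals of positive length. Then λ₁(D \ (D + h)) ≤ N·h for every h > 0, and lim_{h → 0⁺} λ₁(D \ (D + h)) / h = N. -/
open MeasureTheory Topology Filter Set
open scoped ENNReal

/-- If `D ⊆ ℝ` is bounded, measurable and coincides up to a null set with a union of `N`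
pairwise disjoint closed intervals of positive length, then `λ₁(D \ (D + h)) ≤ N h` for
every `h > 0` and `lim_{h → 0⁺} λ₁(D \ (D + h)) / h = N`. -/
theorem measure_sdiff_translate_of_union_intervals (N : ℕ) (hN : 0 < N)
    (D : Set ℝ) (hmeas : MeasurableSet D) (hbd : Bornology.IsBounded D)
    (a b : Fin N → ℝ) (hab : ∀ i, a i < b i)
    (hdisj : ∀ i j, i ≠ j → Disjoint (Set.Icc (a i) (b i)) (Set.Icc (a j) (b j)))
    (hnull : volume (symmDiff D (⋃ i, Set.Icc (a i) (b i))) = 0) :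
    (∀ h : ℝ, 0 < h → volume (D \ ((· + h) '' D)) ≤ ENNReal.ofReal (N * h)) ∧
    Tendsto (fun h : ℝ => volume (D \ ((· + h) '' D)) / ENNReal.ofReal h) (𝓝[>] 0)
      (𝓝 (N : ℝ≥0∞)) := by
  haveI : Nonempty (Fin N) := ⟨⟨0, hN⟩⟩
  set E : Set ℝ := ⋃ i, Set.Icc (a i) (b i) with hE
  have hDE : D =ᵐ[volume] E := measure_symmDiff_eq_zero_iff.mp hnull
  -- transfer measure from D to E
  have hvol : ∀ h : ℝ, volume (D \ ((· + h) '' D)) = volume (E \ ((· + h) '' E)) := by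
    intro h
    have himg : ∀ S : Set ℝ, (· + h) '' S = (fun x => x + (-h)) ⁻¹' S := by
      intro S
      ext x
      constructor
      · rintro ⟨y, hy, rfl⟩; simpa using hy
      · intro hx; exact ⟨x + (-h), hx, by ring⟩
    have hqmp : Measure.QuasiMeasurePreserving (fun x : ℝ => x + (-h)) volume volume :=
      (measurePreserving_add_right volume (-h)).quasiMeasurePreserving
    have himg_ae : ((· + h) '' D) =ᵐ[volume] ((· + h) '' E) := by
      rw [himg D, himg E]
      exact hqmp.preimage_ae_eq hDE
    exact measure_congr (hDE.diff himg_ae)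
  -- the translated union
  have himgE : ∀ h : ℝ, (· + h) '' E = ⋃ i, Set.Icc (a i + h) (b i + h) := by
    intro h
    rw [hE, Set.image_iUnion]
    exact iUnion_congr fun i => Set.image_add_const_Icc _ _ _
  -- inclusion (always)
  have hsub : ∀ h : ℝ, 0 < h → E \ ((· + h) '' E) ⊆ ⋃ i, Set.Ico (a i) (a i + h) := by
    intro h hpos x hx
    obtain ⟨hxE, hxn⟩ := hx
    rw [hE, Set.mem_iUnion] at hxE
    obtain ⟨i, hi1, hi2⟩ := hxE
    rw [himgE h, Set.mem_iUnion] at hxn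
    push_neg at hxn
    have := hxn i
    rw [Set.mem_Icc] at this
    push_neg at this
    have hxlt : x < a i + h := by
      by_contra hcon
      push_neg at hcon
      have := this hcon
      linarith
    exact Set.mem_iUnion.mpr ⟨i, hi1, hxlt⟩
  -- separation of intervals
  have hsep : ∀ i j, i ≠ j → b j < a i ∨ b i < a j := by
    intro i j hij
    by_contra hc
    push_neg at hc
    have hm1 : max (a i) (a j) ∈ Set.Icc (a i) (b i) :=
      ⟨le_max_left _ _, max_le (hab i).le hc.2⟩
    have hm2 : max (a i) (a j) ∈ Set.Icc (a j) (b j) :=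
      ⟨le_max_right _ _, max_le hc.1 (hab j).le⟩
    exact Set.not_disjoint_iff.mpr ⟨_, hm1, hm2⟩ (hdisj i j hij)
  -- the separation constant
  set d : Fin N × Fin N → ℝ := fun p =>
    if b p.2 < a p.1 then a p.1 - b p.2 else b p.1 - a p.1 with hd
  set h0 : ℝ := Finset.univ.inf' (Finset.univ_nonempty) d with hh0
  have hdpos : ∀ p : Fin N × Fin N, 0 < d p := by
    intro p
    rw [hd]
    dsimp only
    split_ifs with hcase
    · linarith
    · linarith [hab p.1]
  have h0pos : 0 < h0 := by
    rw [hh0, Finset.lt_inf'_iff]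
    intro p _
    exact hdpos p
  have h0le : ∀ p : Fin N × Fin N, h0 ≤ d p := fun p =>
    Finset.inf'_le d (Finset.mem_univ p)
  have h0len : ∀ i : Fin N, h0 ≤ b i - a i := by
    intro i
    have := h0le (i, i)
    rw [hd] at this
    simpa [not_lt.mpr (hab i).le] using this
  -- exact identity for small h
  have heq : ∀ h : ℝ, 0 < h → h < h0 →
      E \ ((· + h) '' E) = ⋃ i, Set.Ico (a i) (a i + h) := by
    intro h hpos hlt
    refine Set.Subset.antisymm (hsub h hpos) ?_
    intro x hx
    rw [Set.mem_iUnion] at hx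
    obtain ⟨i, hi1, hi2⟩ := hx
    have hlen : h < b i - a i := lt_of_lt_of_le hlt (h0len i)
    constructor
    · rw [hE, Set.mem_iUnion]
      exact ⟨i, hi1, by linarith⟩
    · rw [himgE h, Set.mem_iUnion]
      push_neg
      intro j
      rw [Set.mem_Icc]
      push_neg
      intro hj1
      by_cases hji : j = i
      · subst hji; linarith
      · have haj : a j < a i := by linarith
        rcases hsep i j (Ne.symm hji) with hbj | hbi
        · have := h0le (i, j)
          rw [hd] at this
          simp only [if_pos hbj] at this
          linarith
        · linarith [hab i]
  -- measurability and disjointness of the Ico pieces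
  have hIcoSub : ∀ h : ℝ, h ≤ h0 → ∀ i : Fin N,
      Set.Ico (a i) (a i + h) ⊆ Set.Icc (a i) (b i) := by
    intro h hh i x hx
    exact ⟨hx.1, by have := h0len i; linarith [hx.2]⟩
  have hvolU : ∀ h : ℝ, 0 < h → h ≤ h0 →
      volume (⋃ i, Set.Ico (a i) (a i + h)) = (N : ℝ≥0∞) * ENNReal.ofReal h := by
    intro h hpos hle
    rw [measure_iUnion
      (fun i j hij => ((hdisj i j hij).mono (hIcoSub h hle i) (hIcoSub h hle j)))
      (fun i => measurableSet_Ico)]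
    simp only [Real.volume_Ico, add_sub_cancel_left]
    rw [tsum_fintype]
    simp [Finset.sum_const, mul_comm]
  constructor
  · -- upper bound
    intro h hpos
    rw [hvol h]
    calc volume (E \ ((· + h) '' E))
        ≤ volume (⋃ i, Set.Ico (a i) (a i + h)) := measure_mono (hsub h hpos)
      _ ≤ ∑' i : Fin N, volume (Set.Ico (a i) (a i + h)) := measure_iUnion_le _
      _ = ∑' _i : Fin N, ENNReal.ofReal h := by
          simp [Real.volume_Ico]
      _ = (N : ℝ≥0∞) * ENNReal.ofReal h := by
          rw [tsum_fintype]; simp [Finset.sum_const, mul_comm]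
      _ = ENNReal.ofReal (N * h) := by
          rw [ENNReal.ofReal_mul (by positivity), ENNReal.ofReal_natCast]
  · -- the limit
    have hev : (fun h : ℝ => volume (D \ ((· + h) '' D)) / ENNReal.ofReal h)
        =ᶠ[𝓝[>] (0 : ℝ)] fun _ => (N : ℝ≥0∞) := by
      filter_upwards [Ioo_mem_nhdsGT_of_mem ⟨le_refl (0 : ℝ), h0pos⟩] with h hh
      rw [hvol h, heq h hh.1 hh.2, hvolU h hh.1 hh.2.le, mul_div_assoc,
        ENNReal.div_self (by simpa using hh.1) ENNReal.ofReal_ne_top, mul_one]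
    exact Tendsto.congr' hev.symm tendsto_const_nhds
end
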